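/- Let τ : M₃ × ℝ³ → ℝ be differentiable, and let S : M₃ × ℝ³ → M₃ and v : M₃ × ℝ³ → ℝ³ be arbitrary functions. Suppose the dissipation inequality holds identically in all directions: for every (F, p) ∈ M₃ × ℝ³ and every (Ḟ, ṗ) ∈ M₃ × ℝ³, Dτ(F,p)[(Ḟ, ṗ)] ≤ ⟨S(F,p), Ḟ⟩ + ⟨v(F,p), ṗ⟩, where Dτ(F,p) is the Fréchet derivative of τ at (F,p). Then for every (F,p), S(F,p) is the partial (Frobenius) gradient of τ with respect to F at (F,p), and v(F,p) is the partial gradient of τ with respect to p at (F,p); i.e., Dτ(F,p)[(Ḟ,ṗ)] = ⟨S(F,p), Ḟ⟩ + ⟨v(F,p), ṗ⟩ for all (Ḟ,ṗ). -/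
import Mathlib

open scoped RealInnerProductSpace

noncomputable section

abbrev M3 : Type := EuclideanSpace ℝ (Fin 3 × Fin 3)
abbrev R3 : Type := EuclideanSpace ℝ (Fin 3)

/-- Necessity part of Proposition 2: if the dissipation inequality holds identically
in all directions, then `S` and `v` are the partial gradients of `τ`. -/
theorem stmt0 (τ : M3 × R3 → ℝ) (S : M3 × R3 → M3) (v : M3 × R3 → R3)
    (hτ : Differentiable ℝ τ)
    (hdiss : ∀ Fp : M3 × R3, ∀ d : M3 × R3,
      fderiv ℝ τ Fp d ≤ ⟪S Fp, d.1⟫ + ⟪v Fp, d.2⟫) :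
    ∀ Fp : M3 × R3, ∀ d : M3 × R3,
      fderiv ℝ τ Fp d = ⟪S Fp, d.1⟫ + ⟪v Fp, d.2⟫ := by
  intro Fp d
  have h1 := hdiss Fp d
  have h2 := hdiss Fp (-d)
  simp only [map_neg, Prod.fst_neg, Prod.snd_neg, inner_neg_right] at h2
  linarith
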